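/- Let m ∈ ℕ and σ > 0. For every M > 0 there exist constants ε > 0 and K > 0, depending only on M, with the following property: for every bounded measurable h : ℝ^m → ℝ with ‖h‖_∞ ≤ εσ, every u ∈ ℝ^m and v, v_h ∈ ℝ with |v − v_h| ≤ Mσ, if U* has law N(u, σ²I_m), V* has law N(v, σ²), and U*, V* are independent, then the normalized bootstrap z-value ψ := σ · Φ̄^{-1}(P(V* ≤ v_h − h(U*))) satisfies |ψ − (v − v_h + E[h(U*)])| ≤ K ‖h‖_∞² / σ. -/

import Mathlib

/-!
Conditioning on `U*`, the probability equals `E Φ̄(c + h(U*)/σ)` with `c = (v - v_h)/σ`.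
Since `|Φ̄''(t)| = |t φ(t)| ≤ 1`, a first-order expansion gives
`E Φ̄(c + h/σ) = Φ̄(c) - φ(c) E h/σ + O(ε²)` with `ε = ‖h‖_∞/σ`. On `|c| ≤ M` the slope `φ(c)` is at
least `φ(M)`, so this value lies between `Φ̄(c + E h/σ ± δ)` for `δ = 4ε²/φ(M)` as soon as
`ε ≤ φ(M)/8`; hence `Φ̄⁻¹` of it is within `δ` of `c + E h/σ`, and multiplying by `σ` gives
`K = 4/φ(M)`.
-/

open MeasureTheory ProbabilityTheory Set
open scoped NNReal

noncomputable def stdphi (t : ℝ) : ℝ :=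
  (Real.sqrt (2 * Real.pi))⁻¹ * Real.exp (-t ^ 2 / 2)

noncomputable def Phibar (x : ℝ) : ℝ := ∫ t in Set.Ioi x, stdphi t

noncomputable def PhibarInv : ℝ → ℝ := Function.invFun Phibar

noncomputable def gaussianPi {m : ℕ} (μ : Fin m → ℝ) (v : ℝ≥0) :
    Measure (Fin m → ℝ) :=
  Measure.pi fun i => gaussianReal (μ i) v

lemma stdphi_eq_gaussianPDFReal : stdphi = gaussianPDFReal 0 1 := by
  ext t
  simp [stdphi, gaussianPDFReal]

lemma stdphi_pos (t : ℝ) : 0 < stdphi t :=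
  stdphi_eq_gaussianPDFReal ▸ gaussianPDFReal_pos 0 1 t one_ne_zero

lemma integrable_stdphi : Integrable stdphi :=
  stdphi_eq_gaussianPDFReal ▸ integrable_gaussianPDFReal 0 1

lemma integral_stdphi : ∫ t, stdphi t = 1 :=
  stdphi_eq_gaussianPDFReal ▸ integral_gaussianPDFReal_eq_one 0 one_ne_zero

lemma stdphi_le_stdphi_of_abs_le {x y : ℝ} (h : |x| ≤ y) : stdphi y ≤ stdphi x := by
  have hsq : x ^ 2 ≤ y ^ 2 := sq_le_sq' (abs_le.mp h).1 (abs_le.mp h).2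
  unfold stdphi
  gcongr

lemma hasDerivAt_stdphi (x : ℝ) : HasDerivAt stdphi (-x * stdphi x) x := by
  have h : HasDerivAt (fun t : ℝ => -t ^ 2 / 2) (-x) x :=
    ((hasDerivAt_pow 2 x).fun_neg.div_const 2).congr_deriv (by ring)
  exact (h.exp.const_mul (Real.sqrt (2 * Real.pi))⁻¹).congr_deriv (by unfold stdphi; ring)

lemma abs_mul_stdphi_le_one (x : ℝ) : |x * stdphi x| ≤ 1 := by
  have hsqrt : 1 ≤ Real.sqrt (2 * Real.pi) :=
    Real.one_le_sqrt.mpr (by nlinarith [Real.pi_gt_three])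
  -- `|x| ≤ 1 + x²/2 ≤ exp (x²/2)`
  have hx : |x| * Real.exp (-x ^ 2 / 2) ≤ 1 := by
    have hle : |x| ≤ Real.exp (x ^ 2 / 2) := by
      nlinarith [Real.add_one_le_exp (x ^ 2 / 2), sq_nonneg (|x| - 1), sq_abs x]
    calc |x| * Real.exp (-x ^ 2 / 2) ≤ Real.exp (x ^ 2 / 2) * Real.exp (-x ^ 2 / 2) := by
          gcongr
      _ = 1 := by rw [← Real.exp_add]; ring_nf; exact Real.exp_zero
  rw [stdphi, abs_mul, abs_mul, abs_of_pos (Real.exp_pos _),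
    abs_of_pos (by positivity : (0 : ℝ) < (Real.sqrt (2 * Real.pi))⁻¹), mul_left_comm]
  exact mul_le_one₀ (inv_le_one_of_one_le₀ hsqrt) (by positivity) hx

lemma lipschitzWith_stdphi : LipschitzWith 1 stdphi :=
  lipschitzWith_of_nnnorm_deriv_le (fun x => (hasDerivAt_stdphi x).differentiableAt) fun x => by
    rw [← NNReal.coe_le_coe, coe_nnnorm, (hasDerivAt_stdphi x).deriv, Real.norm_eq_abs, neg_mul,
      abs_neg]
    exact abs_mul_stdphi_le_one x

lemma Phibar_nonneg (x : ℝ) : 0 ≤ Phibar x :=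
  setIntegral_nonneg measurableSet_Ioi fun t _ => (stdphi_pos t).le

lemma Phibar_le_one (x : ℝ) : Phibar x ≤ 1 :=
  integral_stdphi ▸
    setIntegral_le_integral integrable_stdphi (.of_forall fun t => (stdphi_pos t).le)

lemma Phibar_sub_Phibar (a b : ℝ) : Phibar a - Phibar b = ∫ t in a..b, stdphi t :=
  intervalIntegral.integral_Ioi_sub_Ioi' integrable_stdphi.integrableOn
    integrable_stdphi.integrableOn

lemma continuous_Phibar : Continuous Phibar := by
  have h : Phibar = fun x => Phibar 0 - ∫ t in (0 : ℝ)..x, stdphi t := by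
    ext x
    rw [← Phibar_sub_Phibar, sub_sub_cancel]
  rw [h]
  exact continuous_const.sub (integrable_stdphi.continuous_primitive 0)

lemma strictAnti_Phibar : StrictAnti Phibar := fun a b hab =>
  sub_pos.mp <| Phibar_sub_Phibar a b ▸
    intervalIntegral.intervalIntegral_pos_of_pos integrable_stdphi.intervalIntegrable stdphi_pos hab

lemma PhibarInv_Phibar (x : ℝ) : PhibarInv (Phibar x) = x :=
  Function.leftInverse_invFun strictAnti_Phibar.injective x

lemma abs_Phibar_add_sub_le (a y : ℝ) : |Phibar (a + y) - Phibar a + y * stdphi a| ≤ y ^ 2 := by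
  have hint :
      Phibar (a + y) - Phibar a + y * stdphi a = ∫ t in a..a + y, (stdphi a - stdphi t) := by
    rw [intervalIntegral.integral_sub intervalIntegrable_const integrable_stdphi.intervalIntegrable,
      intervalIntegral.integral_const, ← Phibar_sub_Phibar, smul_eq_mul]
    ring
  have hbound : ∀ t ∈ uIoc a (a + y), ‖stdphi a - stdphi t‖ ≤ |y| := fun t ht => by
    calc ‖stdphi a - stdphi t‖ ≤ |t - a| := by
          simpa [Real.dist_eq, abs_sub_comm] using lipschitzWith_stdphi.dist_le_mul a t
      _ ≤ |a + y - a| := abs_sub_left_of_mem_uIcc (uIoc_subset_uIcc ht)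
      _ = |y| := by rw [add_sub_cancel_left]
  rw [hint, ← sq_abs y, sq, ← Real.norm_eq_abs]
  simpa using intervalIntegral.norm_integral_le_of_norm_le_const hbound

lemma gaussianReal_zero_one_Ici (x : ℝ) :
    gaussianReal 0 1 (Ici x) = ENNReal.ofReal (Phibar x) := by
  rw [gaussianReal_apply_eq_integral 0 one_ne_zero, ← stdphi_eq_gaussianPDFReal,
    integral_Ici_eq_integral_Ioi, Phibar]

lemma gaussianReal_Iic {σ : ℝ} (hσ : 0 < σ) (v a : ℝ) :
    gaussianReal v (σ ^ 2).toNNReal (Iic a) = ENNReal.ofReal (Phibar ((v - a) / σ)) := by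
  have hlaw : gaussianReal v (σ ^ 2).toNNReal = (gaussianReal 0 1).map (fun x => v - σ * x) := by
    change _ = (gaussianReal 0 1).map ((v - ·) ∘ (σ * ·))
    rw [← Measure.map_map (by fun_prop) (by fun_prop),
      gaussianReal_map_const_mul, gaussianReal_map_const_sub, mul_zero, sub_zero, mul_one]
    congr
    ext
    simp [sq_nonneg]
  have hpre : (fun x => v - σ * x) ⁻¹' Iic a = Ici ((v - a) / σ) := by
    ext x
    simp only [mem_preimage, mem_Iic, mem_Ici, div_le_iff₀ hσ]
    constructor <;> intro <;> linarith
  rw [hlaw, Measure.map_apply (by fun_prop) measurableSet_Iic, hpre, gaussianReal_zero_one_Ici]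

lemma toReal_prod_gaussianReal_setOf_snd_le {α : Type*} [MeasurableSpace α] (μ : Measure α)
    [SFinite μ] {f : α → ℝ} (hf : Measurable f) {σ : ℝ} (hσ : 0 < σ) (v : ℝ) :
    ((μ.prod (gaussianReal v (σ ^ 2).toNNReal)) {p | p.2 ≤ f p.1}).toReal
      = ∫ x, Phibar ((v - f x) / σ) ∂μ := by
  have hmeas : MeasurableSet {p : α × ℝ | p.2 ≤ f p.1} :=
    measurableSet_le measurable_snd (hf.comp measurable_fst)
  rw [Measure.prod_apply hmeas,
    integral_eq_lintegral_of_nonneg_ae (.of_forall fun x => Phibar_nonneg _)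
      (continuous_Phibar.measurable.comp ((hf.const_sub v).div_const σ)).aestronglyMeasurable]
  exact congrArg ENNReal.toReal (lintegral_congr fun x => gaussianReal_Iic hσ v (f x))

lemma abs_PhibarInv_sub_le_of_Phibar_le {q x δ : ℝ} (hδ : 0 ≤ δ) (hq₁ : Phibar (x + δ) ≤ q)
    (hq₂ : q ≤ Phibar (x - δ)) : |PhibarInv q - x| ≤ δ := by
  obtain ⟨y, hy, rfl⟩ := intermediate_value_Icc' (by linarith : x - δ ≤ x + δ)
    continuous_Phibar.continuousOn ⟨hq₁, hq₂⟩
  rw [PhibarInv_Phibar, abs_le]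
  constructor <;> linarith [hy.1, hy.2]

lemma abs_PhibarInv_sub_le {q c t ε p : ℝ} (hp : 0 < p) (hpc : p ≤ stdphi c) (hεp : ε ≤ p / 8)
    (ht : |t| ≤ ε) (hq : |q - Phibar c + t * stdphi c| ≤ ε ^ 2) :
    |PhibarInv q - (c + t)| ≤ 4 / p * ε ^ 2 := by
  set δ := 4 / p * ε ^ 2 with hδ_def
  have hε : 0 ≤ ε := (abs_nonneg t).trans ht
  have hδ : 0 ≤ δ := by positivity
  have hpδ : p * δ = 4 * ε ^ 2 := by rw [hδ_def]; field_simp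
  have hδε : δ ≤ ε / 2 := by nlinarith
  have hslope : 4 * ε ^ 2 ≤ stdphi c * δ := hpδ ▸ mul_le_mul_of_nonneg_right hpc hδ
  -- the Taylor remainders, `ε²` at `c + t` and `(ε + δ)² ≤ 9ε²/4` at `c + t ± δ`, are beaten by
  -- the gain `δ φ(c) ≥ 4ε²`
  have htδ : ∀ s, |s| ≤ δ → (t + s) ^ 2 ≤ 9 / 4 * ε ^ 2 := fun s hs => by
    have := (abs_add_le t s).trans (add_le_add ht hs)
    nlinarith [sq_abs (t + s), abs_nonneg (t + s)]
  have hplus := abs_le.mp ((abs_Phibar_add_sub_le c (t + δ)).trans (htδ δ (abs_of_nonneg hδ).le))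
  have hminus := abs_le.mp ((abs_Phibar_add_sub_le c (t + -δ)).trans
    (htδ (-δ) (by rw [abs_neg, abs_of_nonneg hδ])))
  have hq' := abs_le.mp hq
  apply abs_PhibarInv_sub_le_of_Phibar_le hδ
  · rw [← add_assoc] at hplus
    nlinarith
  · rw [← add_assoc, ← sub_eq_add_neg] at hminus
    nlinarith

lemma abs_integral_Phibar_add_sub_le {α : Type*} [MeasurableSpace α] (μ : Measure α)
    [IsProbabilityMeasure μ] {g : α → ℝ} (hg : Measurable g) {ε : ℝ} (hgε : ∀ x, |g x| ≤ ε)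
    (c : ℝ) :
    |∫ x, Phibar (c + g x) ∂μ - Phibar c + (∫ x, g x ∂μ) * stdphi c| ≤ ε ^ 2 := by
  have hgi : Integrable g μ := .of_bound hg.aestronglyMeasurable ε (.of_forall hgε)
  have hΦi : Integrable (fun x => Phibar (c + g x)) μ :=
    .of_bound (continuous_Phibar.measurable.comp (hg.const_add c)).aestronglyMeasurable 1
      (.of_forall fun x => by
        rw [Real.norm_eq_abs, abs_of_nonneg (Phibar_nonneg _)]; exact Phibar_le_one _)
  have hsplit : ∫ x, Phibar (c + g x) ∂μ - Phibar c + (∫ x, g x ∂μ) * stdphi c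
      = ∫ x, (Phibar (c + g x) - Phibar c + g x * stdphi c) ∂μ := by
    rw [integral_add (f := fun x => Phibar (c + g x) - Phibar c) (hΦi.sub (integrable_const _))
      (hgi.mul_const _),
      integral_sub hΦi (integrable_const _), integral_const, integral_mul_const]
    simp
  have hbound : ∀ x, ‖Phibar (c + g x) - Phibar c + g x * stdphi c‖ ≤ ε ^ 2 := fun x =>
    (abs_Phibar_add_sub_le c (g x)).trans (sq_le_sq' (abs_le.mp (hgε x)).1 (abs_le.mp (hgε x)).2)
  rw [hsplit, ← Real.norm_eq_abs]
  simpa using norm_integral_le_of_norm_le_const (μ := μ) (.of_forall hbound)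

lemma abs_PhibarInv_integral_Phibar_add_sub_le {α : Type*} [MeasurableSpace α] (μ : Measure α)
    [IsProbabilityMeasure μ] {g : α → ℝ} (hg : Measurable g) {c ε p : ℝ} (hp : 0 < p)
    (hpc : p ≤ stdphi c) (hεp : ε ≤ p / 8) (hgε : ∀ x, |g x| ≤ ε) :
    |PhibarInv (∫ x, Phibar (c + g x) ∂μ) - (c + ∫ x, g x ∂μ)| ≤ 4 / p * ε ^ 2 := by
  have hmean : |∫ x, g x ∂μ| ≤ ε := by
    simpa using norm_integral_le_of_norm_le_const (μ := μ) (f := g) (.of_forall hgε)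
  exact abs_PhibarInv_sub_le hp hpc hεp hmean (abs_integral_Phibar_add_sub_le μ hg hgε c)

instance {m : ℕ} (μ : Fin m → ℝ) (v : ℝ≥0) : IsProbabilityMeasure (gaussianPi μ v) := by
  unfold gaussianPi
  infer_instance

/-- Scaling law of the normalized bootstrap z-value: for every `M > 0` there are
`ε, K > 0`, depending only on `M`, such that for every bounded measurable `h` with
`‖h‖_∞ ≤ εσ` and every `u, v, v_h` with `|v − v_h| ≤ Mσ`, the normalized bootstrap
z-value `ψ = σ Φ̄⁻¹(P(V* ≤ v_h − h(U*)))` satisfies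
`|ψ − (v − v_h + E h(U*))| ≤ K‖h‖_∞²/σ`. -/
theorem stmt_3 :
    ∀ M : ℝ, 0 < M → ∃ ε K : ℝ, 0 < ε ∧ 0 < K ∧
      ∀ (m : ℕ) (σ : ℝ), 0 < σ →
      ∀ h : (Fin m → ℝ) → ℝ, Measurable h →
        BddAbove (Set.range fun x => |h x|) → (⨆ x, |h x|) ≤ ε * σ →
      ∀ (u : Fin m → ℝ) (v vh : ℝ), |v - vh| ≤ M * σ →
        |σ * PhibarInv ((((gaussianPi u (σ ^ 2).toNNReal).prod
              (gaussianReal v (σ ^ 2).toNNReal))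
              {p : (Fin m → ℝ) × ℝ | p.2 ≤ vh - h p.1}).toReal)
          - (v - vh + ∫ x, h x ∂(gaussianPi u (σ ^ 2).toNNReal))|
          ≤ K * (⨆ x, |h x|) ^ 2 / σ := by
  intro M _
  set p := stdphi M
  have hp : 0 < p := stdphi_pos M
  refine ⟨p / 8, 4 / p, by positivity, by positivity, ?_⟩
  intro m σ hσ h hh hbdd hsup u v vh hvvh
  set μ := gaussianPi u (σ ^ 2).toNNReal
  set S := ⨆ x, |h x|
  have hc : p ≤ stdphi ((v - vh) / σ) := stdphi_le_stdphi_of_abs_le <| by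
    rwa [abs_div, abs_of_pos hσ, div_le_iff₀ hσ]
  have hhσ : ∀ x, |h x / σ| ≤ S / σ := fun x => by
    rw [abs_div, abs_of_pos hσ]
    exact div_le_div_of_nonneg_right (le_ciSup hbdd x) hσ.le
  have key := abs_PhibarInv_integral_Phibar_add_sub_le μ (hh.div_const σ) hp hc
    ((div_le_iff₀ hσ).mpr hsup) hhσ
  have hshift : ∀ x, (v - (vh - h x)) / σ = (v - vh) / σ + h x / σ := fun x => by ring
  rw [integral_div] at key
  rw [toReal_prod_gaussianReal_setOf_snd_le μ (hh.const_sub vh) hσ]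
  simp_rw [hshift]
  calc _ = σ * |PhibarInv (∫ x, Phibar ((v - vh) / σ + h x / σ) ∂μ)
        - ((v - vh) / σ + (∫ x, h x ∂μ) / σ)| := by
        rw [← abs_of_pos hσ, ← abs_mul, abs_of_pos hσ]
        congr 1
        field_simp
    _ ≤ σ * (4 / p * (S / σ) ^ 2) := by gcongr
    _ = 4 / p * S ^ 2 / σ := by field_simp
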